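/- arXiv:1307.4034 — 2 statements merged into one kernel-verified Lean document; each statement's English description precedes it below -/
import Mathlib

section
/- The series ∑_{k ∈ ℤ² \ {0}} (1/(2|k|²))(1 − exp(−2|k|⁴ t)) diverges to infinity for every t > 0. -/
/-!
Since `|k| ≥ 1` for `k ≠ 0`, each summand is at least `(1 - e^{-2t}) / (2|k|²)`, so the series
dominates a positive multiple of the lattice sum `∑_{k ≠ 0} 1/|k|²`, which diverges in dimension
two: the `n + 1` points `(n + 1, b + 1)` with `b ≤ n` contribute at least `1 / (2(n + 1))` to it,
and the harmonic series diverges.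
-/

open scoped ENNReal

/-- Euclidean norm of a lattice point in `ℤ²`. -/
noncomputable def latNorm (m : ℤ × ℤ) : ℝ :=
  Real.sqrt ((m.1 : ℝ)^2 + (m.2 : ℝ)^2)

lemma latNorm_sq (m : ℤ × ℤ) : latNorm m ^ 2 = (m.1 : ℝ) ^ 2 + (m.2 : ℝ) ^ 2 :=
  Real.sq_sqrt (by positivity)

lemma one_le_latNorm_sq {m : ℤ × ℤ} (hm : m ≠ 0) : 1 ≤ latNorm m ^ 2 := by
  have one_le_sq {n : ℤ} (hn : n ≠ 0) : (1 : ℝ) ≤ (n : ℝ) ^ 2 :=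
    one_le_sq_iff_one_le_abs _ |>.mpr (by exact_mod_cast Int.one_le_abs hn)
  rw [latNorm_sq]
  rcases m with ⟨a, b⟩
  obtain ha | hb : a ≠ 0 ∨ b ≠ 0 := by
    by_contra! h
    exact hm (Prod.ext h.1 h.2)
  · nlinarith [one_le_sq ha, sq_nonneg (b : ℝ)]
  · nlinarith [one_le_sq hb, sq_nonneg (a : ℝ)]

lemma ENNReal.tsum_ofReal_eq_top {α : Type*} {f : α → ℝ} (hf : ∀ a, 0 ≤ f a)
    (h : ¬Summable f) : ∑' a, ENNReal.ofReal (f a) = ∞ := by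
  by_contra hfin
  refine h ((ENNReal.summable_toReal hfin).congr fun a => ?_)
  exact ENNReal.toReal_ofReal (hf a)

lemma tsum_ofReal_div_nat_succ_eq_top {c : ℝ} (hc : 0 < c) :
    ∑' n : ℕ, ENNReal.ofReal (c / ((n : ℝ) + 1)) = ∞ := by
  refine ENNReal.tsum_ofReal_eq_top (fun n => by positivity) fun h => ?_
  have harmonic : ¬Summable fun n : ℕ => 1 / ((n : ℝ) + 1) := by
    exact_mod_cast mt (summable_nat_add_iff 1).1 Real.not_summable_one_div_natCast
  simp only [← mul_one_div c] at h
  exact harmonic ((summable_mul_left_iff hc.ne').1 h)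

lemma ofReal_div_nat_succ_le_tsum (n : ℕ) :
    ENNReal.ofReal ((1 / 2) / ((n : ℝ) + 1)) ≤
      ∑' b : ℕ, ENNReal.ofReal (1 / (((n : ℝ) + 1) ^ 2 + ((b : ℝ) + 1) ^ 2)) := by
  calc ENNReal.ofReal ((1 / 2) / ((n : ℝ) + 1))
      = ∑ _b ∈ Finset.range (n + 1), ENNReal.ofReal (1 / (2 * ((n : ℝ) + 1) ^ 2)) := by
        rw [Finset.sum_const, Finset.card_range, nsmul_eq_mul, ← ENNReal.ofReal_natCast,
          ← ENNReal.ofReal_mul (by positivity)]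
        congr 1
        push_cast
        field_simp
    _ ≤ ∑ b ∈ Finset.range (n + 1),
          ENNReal.ofReal (1 / (((n : ℝ) + 1) ^ 2 + ((b : ℝ) + 1) ^ 2)) := by
        refine Finset.sum_le_sum fun b hb => ENNReal.ofReal_le_ofReal ?_
        have hbn : (b : ℝ) ≤ n := by exact_mod_cast Nat.lt_succ_iff.mp (Finset.mem_range.mp hb)
        gcongr
        nlinarith
    _ ≤ _ := ENNReal.sum_le_tsum _

lemma tsum_ofReal_one_div_latNorm_sq_eq_top :
    ∑' k : {k : ℤ × ℤ // k ≠ 0}, ENNReal.ofReal (1 / latNorm k.1 ^ 2) = ∞ := by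
  let shift : ℕ × ℕ → {k : ℤ × ℤ // k ≠ 0} := fun p =>
    ⟨((p.1 : ℤ) + 1, (p.2 : ℤ) + 1), by simp [Prod.ext_iff]; omega⟩
  have shift_injective : Function.Injective shift := by
    intro p q h
    simp only [shift, Subtype.mk.injEq, Prod.ext_iff] at h
    exact Prod.ext (by omega) (by omega)
  rw [eq_top_iff]
  calc ∞ = ∑' n : ℕ, ENNReal.ofReal ((1 / 2) / ((n : ℝ) + 1)) :=
        (tsum_ofReal_div_nat_succ_eq_top (by norm_num)).symm
    _ ≤ ∑' (a : ℕ) (b : ℕ), ENNReal.ofReal (1 / (((a : ℝ) + 1) ^ 2 + ((b : ℝ) + 1) ^ 2)) :=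
        ENNReal.tsum_le_tsum ofReal_div_nat_succ_le_tsum
    _ = ∑' p : ℕ × ℕ, ENNReal.ofReal (1 / latNorm (shift p).1 ^ 2) := by
        rw [← ENNReal.tsum_prod]
        refine tsum_congr fun p => ?_
        simp [shift, latNorm_sq]
    _ ≤ _ := ENNReal.tsum_comp_le_tsum_of_injective shift_injective _

lemma one_sub_exp_neg_le_of_ne_zero {t : ℝ} (ht : 0 ≤ t) {k : ℤ × ℤ} (hk : k ≠ 0) :
    1 - Real.exp (-2 * t) ≤ 1 - Real.exp (-2 * latNorm k ^ 4 * t) := by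
  have : 1 ≤ latNorm k ^ 4 := by nlinarith [one_le_latNorm_sq hk]
  gcongr
  nlinarith

/-- The series `∑_{k ≠ 0} (1/(2|k|²))(1 − exp(−2|k|⁴ t))`, which equals
`E[‖∇z(t)‖²_{L²}]` for the stochastic convolution `z`, diverges for every `t > 0`. -/
theorem gradient_second_moment_diverges (t : ℝ) (ht : 0 < t) :
    (∑' k : {k : ℤ × ℤ // k ≠ 0},
      ENNReal.ofReal ((1 / (2 * latNorm k.1 ^ 2)) * (1 - Real.exp (-2 * latNorm k.1 ^ 4 * t))))
      = ∞ := by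
  set c := 1 - Real.exp (-2 * t)
  have hc : 0 < c := by simpa [c] using ht
  have termwise (k : {k : ℤ × ℤ // k ≠ 0}) :
      ENNReal.ofReal (c / 2) * ENNReal.ofReal (1 / latNorm k.1 ^ 2) ≤
        ENNReal.ofReal ((1 / (2 * latNorm k.1 ^ 2)) * (1 - Real.exp (-2 * latNorm k.1 ^ 4 * t))) := by
    rw [← ENNReal.ofReal_mul (by positivity)]
    refine ENNReal.ofReal_le_ofReal ?_
    calc c / 2 * (1 / latNorm k.1 ^ 2) = 1 / (2 * latNorm k.1 ^ 2) * c := by ring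
      _ ≤ _ := by gcongr; exact one_sub_exp_neg_le_of_ne_zero ht.le k.2
  refine eq_top_iff.2 (le_trans ?_ (ENNReal.tsum_le_tsum termwise))
  rw [ENNReal.tsum_mul_left, tsum_ofReal_one_div_latNorm_sq_eq_top,
    ENNReal.mul_top (by simpa using hc)]
end

section
/- There exists a constant C such that for every k ∈ ℤ² \ {0}, ∑_{m+n=k, m≠0, n≠0} 1/(|m|² |n|²) ≤ C |k|^{-2} log(1 + |k|). -/
/-!
Pair each term with its smaller factor: if `m + n = k` and `|m| ≤ |n|`, then `|n| ≥ |k| / 2`, so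
`1 / (|m|² |n|²) ≤ min (4 / (|k| |m|)²) (1 / |m|⁴)`, and the whole sum is at most twice the sum of
this bound over `m ≠ 0`. On the sup-norm sphere `max (|m₁|, |m₂|) = j`, which has `8 j` points, all
with `|m| ≥ j`, the bound sums to at most `min (32 / (|k|² j)) (8 / j³)`. Summing over `j`, the
harmonic range `j ≤ |k|` gives `O (log |k| / |k|²)` and the tail `j > |k|` gives `O (1 / |k|²)`.
-/

open scoped ENNReal

open Finset Real

lemma latNorm_nonneg (m : ℤ × ℤ) : 0 ≤ latNorm m := sqrt_nonneg _

lemma latNorm_zero : latNorm 0 = 0 := by simp [latNorm]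

lemma latNorm_eq_norm (m : ℤ × ℤ) : latNorm m = ‖((m.1 : ℝ) : ℂ) + (m.2 : ℝ) * Complex.I‖ :=
  (Complex.norm_add_mul_I _ _).symm

lemma latNorm_add_le (m n : ℤ × ℤ) : latNorm (m + n) ≤ latNorm m + latNorm n := by
  simp only [latNorm_eq_norm, Prod.fst_add, Prod.snd_add, Int.cast_add, Complex.ofReal_add]
  exact (norm_add_le _ _).trans_eq' (by ring_nf)

lemma max_natAbs_le_latNorm (m : ℤ × ℤ) : ((max m.1.natAbs m.2.natAbs : ℕ) : ℝ) ≤ latNorm m := by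
  have key (a b : ℤ) : (a.natAbs : ℝ) ^ 2 ≤ (a : ℝ) ^ 2 + (b : ℝ) ^ 2 := by
    rw [Nat.cast_natAbs, Int.cast_abs, sq_abs]
    exact le_add_of_nonneg_right (sq_nonneg _)
  apply le_sqrt_of_sq_le
  rcases le_total m.1.natAbs m.2.natAbs with h | h
  · rw [max_eq_right h, add_comm]; exact key _ _
  · rw [max_eq_left h]; exact key _ _

lemma one_le_latNorm {m : ℤ × ℤ} (hm : m ≠ 0) : 1 ≤ latNorm m := by
  refine le_trans ?_ (max_natAbs_le_latNorm m)
  have : m.1 ≠ 0 ∨ m.2 ≠ 0 := by contrapose! hm; exact Prod.ext hm.1 hm.2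
  exact_mod_cast show 1 ≤ max m.1.natAbs m.2.natAbs by omega

theorem ENNReal.tsum_int_prod_le_of_le_on_box {g : ℤ × ℤ → ℝ≥0∞} {h : ℕ → ℝ≥0∞}
    (hg : ∀ n ≠ 0, ∀ m ∈ box n, g m ≤ h n) :
    ∑' m, g m ≤ g 0 + ∑' n : ℕ, 8 * n * h n := by
  have shell (n : ℕ) :
      ∑' m : (fun m : ℤ × ℤ ↦ max m.1.natAbs m.2.natAbs) ⁻¹' {n}, g m = ∑ m ∈ box n, g m := by
    have : (fun m : ℤ × ℤ ↦ max m.1.natAbs m.2.natAbs) ⁻¹' {n} = ↑(box n : Finset (ℤ × ℤ)) := by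
      ext m; simp
    rw [this]
    exact Finset.tsum_subtype _ _
  calc ∑' m, g m = ∑' n : ℕ, ∑ m ∈ box n, g m := by
        simp only [← shell, ENNReal.tsum_fiberwise]
    _ = g 0 + ∑' n : ℕ, ∑ m ∈ box (n + 1), g m := by
        rw [tsum_eq_zero_add' ENNReal.summable, box_zero, sum_singleton]
    _ ≤ g 0 + ∑' n : ℕ, 8 * ↑(n + 1) * h (n + 1) := by
        gcongr with n
        calc ∑ m ∈ box (n + 1), g m ≤ #(box (n + 1) : Finset (ℤ × ℤ)) • h (n + 1) :=
              sum_le_card_nsmul _ _ _ (hg _ n.succ_ne_zero)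
          _ = 8 * ↑(n + 1) * h (n + 1) := by
              rw [Int.card_box n.succ_ne_zero, nsmul_eq_mul]; push_cast; rfl
    _ ≤ g 0 + ∑' n : ℕ, 8 * n * h n := add_le_add le_rfl <|
        ENNReal.tsum_comp_le_tsum_of_injective Nat.succ_injective fun n : ℕ ↦ 8 * n * h n

noncomputable def pairBound (c r : ℝ) : ℝ := min (4 / (c * r) ^ 2) (1 / r ^ 4)

lemma pairBound_nonneg (c r : ℝ) : 0 ≤ pairBound c r := le_min (by positivity) (by positivity)

lemma pairBound_antitoneOn {c : ℝ} (hc : 0 < c) : AntitoneOn (pairBound c) (Set.Ioi 0) :=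
  fun r (hr : 0 < r) _ _ hrs ↦ min_le_min (by gcongr) (by gcongr)

lemma one_div_sq_mul_sq_le_pairBound {c r s : ℝ} (hc : 0 < c) (hr : 0 < r) (hrs : r ≤ s)
    (hcs : c ≤ 2 * s) : 1 / (r ^ 2 * s ^ 2) ≤ pairBound c r := by
  have hs : 0 < s := hr.trans_le hrs
  refine le_min ?_ ?_
  · rw [div_le_div_iff₀ (by positivity) (by positivity)]
    nlinarith [mul_le_mul hcs hcs hc.le (by positivity), sq_nonneg r]
  · rw [div_le_div_iff₀ (by positivity) (by positivity)]
    nlinarith [mul_le_mul hrs hrs hr.le hs.le, sq_nonneg r]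

lemma one_div_sq_mul_sq_le_pairBound_add {c r s : ℝ} (hc : 0 < c) (hr : 0 ≤ r) (hs : 0 ≤ s)
    (hcrs : c ≤ r + s) : 1 / (r ^ 2 * s ^ 2) ≤ pairBound c r + pairBound c s := by
  wlog hrs : r ≤ s generalizing r s
  · rw [mul_comm, add_comm]
    exact this hs hr (by linarith) (by linarith)
  rcases hr.eq_or_lt with rfl | hr
  · simpa using add_nonneg (pairBound_nonneg c 0) (pairBound_nonneg c s)
  · exact (one_div_sq_mul_sq_le_pairBound hc hr hrs (by linarith)).trans
      (le_add_of_nonneg_right (pairBound_nonneg c s))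

lemma sum_range_mul_pairBound_le {c : ℝ} (hc : 1 ≤ c) (M : ℕ) :
    ∑ n ∈ range M, 8 * n * pairBound c n ≤ (48 + 32 * log c) / c ^ 2 := by
  set N := ⌊c⌋₊
  have hN : 1 ≤ N := Nat.le_floor (by exact_mod_cast hc)
  have near : ∑ n ∈ range M with n ≤ N, 8 * n * pairBound c n ≤ 32 * (1 + log c) / c ^ 2 := by
    have term (n : ℕ) : 8 * n * pairBound c n ≤ 32 / c ^ 2 * (n : ℝ)⁻¹ := by
      rcases n.eq_zero_or_pos with rfl | hn
      · simp
      calc 8 * n * pairBound c n ≤ 8 * n * (4 / (c * n) ^ 2) := by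
            gcongr; exact min_le_left _ _
        _ = 32 / c ^ 2 * (n : ℝ)⁻¹ := by field_simp; ring
    have harm : ∑ n ∈ range (N + 1), (n : ℝ)⁻¹ = harmonic N := by
      simp [sum_range_succ', harmonic]
    calc ∑ n ∈ range M with n ≤ N, 8 * n * pairBound c n
        ≤ ∑ n ∈ range (N + 1), 32 / c ^ 2 * (n : ℝ)⁻¹ := by
          refine (sum_le_sum fun n _ ↦ term n).trans
            (sum_le_sum_of_subset_of_nonneg ?_ fun _ _ _ ↦ by positivity)
          intro n; simp only [mem_filter, mem_range]; omega
      _ = 32 / c ^ 2 * harmonic N := by rw [← mul_sum, harm]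
      _ ≤ 32 / c ^ 2 * (1 + log N) := by gcongr; exact harmonic_le_one_add_log N
      _ ≤ 32 / c ^ 2 * (1 + log c) := by
          gcongr
          exact Nat.floor_le (by linarith)
      _ = 32 * (1 + log c) / c ^ 2 := by ring
  have far : ∑ n ∈ range M with ¬ n ≤ N, 8 * n * pairBound c n ≤ 16 / c ^ 2 := by
    have term (n : ℕ) (hn : N < n) : 8 * n * pairBound c n ≤ 8 / c * ((n : ℝ) ^ 2)⁻¹ := by
      have hcn : c < n := (Nat.lt_floor_add_one c).trans_le (by exact_mod_cast hn)
      have hn : (0 : ℝ) < n := by linarith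
      calc 8 * n * pairBound c n ≤ 8 * n * (1 / (n : ℝ) ^ 4) := by
            gcongr; exact min_le_right _ _
        _ = 8 / n * ((n : ℝ) ^ 2)⁻¹ := by field_simp
        _ ≤ 8 / c * ((n : ℝ) ^ 2)⁻¹ := by gcongr
    have tail : (range M).filter (¬ · ≤ N) = Ioo N M := by
      ext n; simp only [mem_filter, mem_range, mem_Ioo]; omega
    calc ∑ n ∈ range M with ¬ n ≤ N, 8 * n * pairBound c n
        ≤ ∑ n ∈ Ioo N M, 8 / c * ((n : ℝ) ^ 2)⁻¹ := by
          rw [← tail]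
          exact sum_le_sum fun n hn ↦ term n (not_le.mp (mem_filter.mp hn).2)
      _ ≤ 8 / c * (2 / (N + 1)) := by rw [← mul_sum]; gcongr; exact sum_Ioo_inv_sq_le N M
      _ ≤ 8 / c * (2 / c) := by gcongr; exact (Nat.lt_floor_add_one c).le
      _ = 16 / c ^ 2 := by ring
  rw [← sum_filter_add_sum_filter_not (range M) (· ≤ N)]
  calc _ ≤ 32 * (1 + log c) / c ^ 2 + 16 / c ^ 2 := add_le_add near far
    _ = (48 + 32 * log c) / c ^ 2 := by ring

lemma tsum_ofReal_pairBound_latNorm_le {c : ℝ} (hc : 1 ≤ c) :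
    ∑' m : ℤ × ℤ, ENNReal.ofReal (pairBound c (latNorm m))
      ≤ ENNReal.ofReal ((48 + 32 * log c) / c ^ 2) := by
  calc ∑' m : ℤ × ℤ, ENNReal.ofReal (pairBound c (latNorm m))
      ≤ ENNReal.ofReal (pairBound c (latNorm 0))
          + ∑' n : ℕ, 8 * n * ENNReal.ofReal (pairBound c n) := by
        refine ENNReal.tsum_int_prod_le_of_le_on_box fun n hn m hm ↦ ENNReal.ofReal_le_ofReal ?_
        have hn : (0 : ℝ) < n := by positivity
        have hnm : (n : ℝ) ≤ latNorm m := by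
          simpa [Int.mem_box.mp hm] using max_natAbs_le_latNorm m
        exact pairBound_antitoneOn (by linarith) hn (hn.trans_le hnm) hnm
    _ = ∑' n : ℕ, ENNReal.ofReal (8 * n * pairBound c n) := by
        simp [latNorm_zero, pairBound, ENNReal.ofReal_mul]
    _ ≤ _ := ENNReal.tsum_le_of_sum_range_le fun M ↦ by
        rw [← ENNReal.ofReal_sum_of_nonneg fun n _ ↦ by have := pairBound_nonneg c n; positivity]
        exact ENNReal.ofReal_le_ofReal (sum_range_mul_pairBound_le hc M)

lemma ENNReal.tsum_subtype_add_eq_le_tsum_sub {G : Type*} [AddCommGroup G] {k : G}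
    {Q : G × G → Prop} (hQ : ∀ p, Q p → p.1 + p.2 = k) (f : G → G → ℝ≥0∞) :
    ∑' p : {p : G × G // Q p}, f p.1.1 p.1.2 ≤ ∑' m, f m (k - m) := by
  have hp (p : {p : G × G // Q p}) : (p : G × G) = (p.1.1, k - p.1.1) :=
    Prod.ext rfl (eq_sub_of_add_eq' (hQ p p.2))
  calc ∑' p : {p : G × G // Q p}, f p.1.1 p.1.2
      = ∑' p : {p : G × G // Q p}, f p.1.1 (k - p.1.1) :=
        tsum_congr fun p ↦ congrArg (f p.1.1) (congrArg Prod.snd (hp p))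
    _ ≤ ∑' m, f m (k - m) := ENNReal.tsum_comp_le_tsum_of_injective
        (fun p q h ↦ Subtype.ext <| (hp p).trans <|
          (congrArg (fun m ↦ (m, k - m)) h).trans (hp q).symm) fun m ↦ f m (k - m)

lemma tsum_one_div_latNorm_sq_mul_le {k : ℤ × ℤ} (hk : k ≠ 0) :
    ∑' m, ENNReal.ofReal (1 / (latNorm m ^ 2 * latNorm (k - m) ^ 2))
      ≤ 2 * ∑' m, ENNReal.ofReal (pairBound (latNorm k) (latNorm m)) := by
  set c := latNorm k
  calc ∑' m, ENNReal.ofReal (1 / (latNorm m ^ 2 * latNorm (k - m) ^ 2))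
      ≤ ∑' m, (ENNReal.ofReal (pairBound c (latNorm m))
          + ENNReal.ofReal (pairBound c (latNorm (k - m)))) := by
        refine ENNReal.tsum_le_tsum fun m ↦ ENNReal.ofReal_add_le.trans' ?_
        refine ENNReal.ofReal_le_ofReal (one_div_sq_mul_sq_le_pairBound_add
          (by linarith [one_le_latNorm hk]) (latNorm_nonneg _) (latNorm_nonneg _) ?_)
        simpa using latNorm_add_le m (k - m)
    _ = 2 * ∑' m, ENNReal.ofReal (pairBound c (latNorm m)) := by
        rw [ENNReal.tsum_add, two_mul]
        congr 1
        exact (Equiv.subLeft k).tsum_eq fun m ↦ ENNReal.ofReal (pairBound c (latNorm m))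

/-- Logarithmic lattice convolution estimate:
`∑_{m+n=k, m,n ≠ 0} |m|^{-2}|n|^{-2} ≤ C |k|^{-2} log(1+|k|)`. -/
theorem lattice_log_sum_estimate :
    ∃ C : ℝ, 0 < C ∧ ∀ k : ℤ × ℤ, k ≠ 0 →
      (∑' p : {p : (ℤ × ℤ) × (ℤ × ℤ) // p.1 ≠ 0 ∧ p.2 ≠ 0 ∧ p.1 + p.2 = k},
        ENNReal.ofReal (1 / (latNorm p.1.1 ^ 2 * latNorm p.1.2 ^ 2)))
        ≤ ENNReal.ofReal (C * latNorm k ^ (-2 : ℝ) * Real.log (1 + latNorm k)) := by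
  refine ⟨256, by norm_num, fun k hk ↦ ?_⟩
  set c := latNorm k
  have hc : 1 ≤ c := one_le_latNorm hk
  have hlog_c : log c ≤ log (1 + c) := log_le_log (by linarith) (by linarith)
  have hlog_two : 1 / 2 ≤ log (1 + c) :=
    (log_two_gt_d9.le.trans' (by norm_num)).trans (log_le_log (by norm_num) (by linarith))
  calc _ ≤ ∑' m, ENNReal.ofReal (1 / (latNorm m ^ 2 * latNorm (k - m) ^ 2)) :=
        ENNReal.tsum_subtype_add_eq_le_tsum_sub (fun _ hp ↦ hp.2.2)
          fun m n ↦ ENNReal.ofReal (1 / (latNorm m ^ 2 * latNorm n ^ 2))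
    _ ≤ 2 * ∑' m, ENNReal.ofReal (pairBound c (latNorm m)) := tsum_one_div_latNorm_sq_mul_le hk
    _ ≤ 2 * ENNReal.ofReal ((48 + 32 * log c) / c ^ 2) := by
        gcongr; exact tsum_ofReal_pairBound_latNorm_le hc
    _ ≤ ENNReal.ofReal (256 * c ^ (-2 : ℝ) * log (1 + c)) := by
        rw [← ENNReal.ofReal_ofNat 2, ← ENNReal.ofReal_mul zero_le_two, rpow_neg (by linarith),
          rpow_two, mul_div_assoc', div_eq_mul_inv]
        refine ENNReal.ofReal_le_ofReal ?_
        have : 0 < (c ^ 2)⁻¹ := by positivity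
        nlinarith
end
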